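/- The complete graph K_4 is the unique (up to isomorphism) simple 3-regular graph with κ₀(x,y) > 0 on every edge, and every edge xy of K_4 satisfies κ₀(x,y) = 2/3. -/

import Mathlib

open Finset

variable {V : Type*}

/-- The non-normalized graph Laplacian: `Δ f (x) = ∑_{y ∼ x} (f y − f x)`. -/
noncomputable def graphLap (G : SimpleGraph V) [∀ v, Fintype (G.neighborSet v)]
    (f : V → ℝ) (x : V) : ℝ :=
  ∑ y ∈ G.neighborFinset x, (f y - f x)

/-- The Bakry–Émery operator `Γ`: `2Γ(f,g) = Δ(fg) − fΔg − gΔf`. -/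
noncomputable def graphGamma (G : SimpleGraph V) [∀ v, Fintype (G.neighborSet v)]
    (f g : V → ℝ) (x : V) : ℝ :=
  (graphLap G (fun z => f z * g z) x - f x * graphLap G g x - g x * graphLap G f x) / 2

/-- The Bakry–Émery operator `Γ₂`: `2Γ₂(f,g) = ΔΓ(f,g) − Γ(f,Δg) − Γ(Δf,g)`. -/
noncomputable def graphGamma2 (G : SimpleGraph V) [∀ v, Fintype (G.neighborSet v)]
    (f g : V → ℝ) (x : V) : ℝ :=
  (graphLap G (graphGamma G f g) x - graphGamma G f (graphLap G g) x -
    graphGamma G (graphLap G f) g x) / 2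

/-- A vertex `x` satisfies the curvature-dimension inequality `CD(0,∞)` if
`Γ₂(f)(x) ≥ 0` for all `f : V → ℝ`. -/
def SatisfiesCD (G : SimpleGraph V) [∀ v, Fintype (G.neighborSet v)] (x : V) : Prop :=
  ∀ f : V → ℝ, 0 ≤ graphGamma2 G f f x

open Classical in
/-- The idleness-0 probability measure `μ_x^0` at a vertex `x`. -/
noncomputable def muZero (G : SimpleGraph V) [∀ v, Fintype (G.neighborSet v)] (x : V) :
    V → ℝ :=
  fun z => if G.Adj x z then 1 / (G.degree x : ℝ) else 0

/-- The Wasserstein distance `W₁(μ_x^0, μ_y^0)`: the infimum of the transport cost over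
all couplings of `μ_x^0` and `μ_y^0`. -/
noncomputable def Wone (G : SimpleGraph V) [∀ v, Fintype (G.neighborSet v)] (x y : V) : ℝ :=
  sInf {w : ℝ | ∃ π : V → V → ℝ,
    (∀ u v, 0 ≤ π u v) ∧
    (∀ u v, π u v ≠ 0 → G.Adj x u ∧ G.Adj y v) ∧
    (∀ u, ∑ v ∈ G.neighborFinset y, π u v = muZero G x u) ∧
    (∀ v, ∑ u ∈ G.neighborFinset x, π u v = muZero G y v) ∧
    w = ∑ u ∈ G.neighborFinset x, ∑ v ∈ G.neighborFinset y, (G.dist u v : ℝ) * π u v}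

/-- The Ollivier–Ricci curvature with idleness `0`: `κ₀(x,y) = 1 − W₁(μ_x^0, μ_y^0)`. -/
noncomputable def kappaZero (G : SimpleGraph V) [∀ v, Fintype (G.neighborSet v)]
    (x y : V) : ℝ :=
  1 - Wone G x y

/-- The prism graph `Y n` on vertices `ZMod n × Bool`: two `n`-cycles joined by rungs;
equivalently the Cartesian product of the cycle `C_n` with `K₂`. -/
def prismGraph (n : ℕ) : SimpleGraph (ZMod n × Bool) :=
  SimpleGraph.fromRel (fun p q => (p.2 = q.2 ∧ q.1 = p.1 + 1) ∨ (p.1 = q.1 ∧ p.2 ≠ q.2))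

/-- The Möbius ladder `M n` on vertices `ZMod (2n)`: the cycle `C_{2n}` together with
all antipodal edges. -/
def mobiusLadder (n : ℕ) : SimpleGraph (ZMod (2 * n)) :=
  SimpleGraph.fromRel (fun p q => q = p + 1 ∨ q = p + (n : ZMod (2 * n)))

open Classical in
/-- The Laplacian matrix `L = D − A` of a finite graph. -/
noncomputable def lapMat (G : SimpleGraph V) [Fintype V] : Matrix V V ℝ :=
  fun i j =>
    (if i = j then ∑ k : V, (if G.Adj i k then (1 : ℝ) else 0) else 0) -
      (if G.Adj i j then 1 else 0)

/-- `λ₁ G` : the smallest non-zero eigenvalue of the Laplacian matrix of `G`. -/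
noncomputable def lambdaOne (G : SimpleGraph V) [Fintype V] : ℝ :=
  sInf {t : ℝ | t ≠ 0 ∧ ∃ v : V → ℝ, v ≠ 0 ∧ (lapMat G).mulVec v = t • v}

noncomputable instance fintypeNeighborSetOfFinite [Finite V] (G : SimpleGraph V) (v : V) :
    Fintype (G.neighborSet v) := Fintype.ofFinite _

/-!
Lower bounds on `W₁` come from the easy half of Kantorovich duality: for an edge `x ∼ y`, every
function `f` with values in `[0, 1]` is 1-Lipschitz on `N(x) ∪ N(y)`, so
`μ_x^0(f) - μ_y^0(f) ≤ W₁(μ_x^0, μ_y^0)`. Taking `f = 1_{N(x)}` shows that an edge without a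
common neighbour has `κ₀ ≤ 0`. Taking `f = 1 - 1_{x}` gives `W₁ ≥ 1/d_y`, which on the complete
graph `K_n` is attained by transporting along the transposition `(x y)`; hence
`κ₀ = 1 - 1/(n-1)` on `K_n`, which is `2/3` for `K₄`.

A connected cubic graph in which every edge lies in a triangle is `K₄`: the three neighbours of
any vertex are pairwise adjacent, so adjacent vertices have the same closed neighbourhood, and by
connectedness this closed neighbourhood is the whole vertex set.
-/

open SimpleGraph

section Transport

variable {G : SimpleGraph V} [∀ v, Fintype (G.neighborSet v)] {x y : V}

theorem muZero_of_adj {z : V} (h : G.Adj x z) : muZero G x z = 1 / G.degree x := by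
  simp [muZero, h]

theorem muZero_of_not_adj {z : V} (h : ¬G.Adj x z) : muZero G x z = 0 := by
  simp [muZero, h]

theorem muZero_nonneg (z : V) : 0 ≤ muZero G x z := by
  unfold muZero
  split <;> positivity

theorem sum_muZero (hx : G.degree x ≠ 0) : ∑ u ∈ G.neighborFinset x, muZero G x u = 1 := by
  rw [sum_congr rfl fun u hu => muZero_of_adj ((G.mem_neighborFinset x u).1 hu), sum_const,
    card_neighborFinset_eq_degree, nsmul_eq_mul]
  field_simp

variable (G x y) in
structure IsCoupling (π : V → V → ℝ) : Prop where
  nonneg : ∀ u v, 0 ≤ π u v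
  adj_of_ne_zero : ∀ u v, π u v ≠ 0 → G.Adj x u ∧ G.Adj y v
  sum_snd : ∀ u, ∑ v ∈ G.neighborFinset y, π u v = muZero G x u
  sum_fst : ∀ v, ∑ u ∈ G.neighborFinset x, π u v = muZero G y v

variable (G x y) in
noncomputable def transportCost (π : V → V → ℝ) : ℝ :=
  ∑ u ∈ G.neighborFinset x, ∑ v ∈ G.neighborFinset y, (G.dist u v : ℝ) * π u v

theorem isCoupling_prod (hx : G.degree x ≠ 0) (hy : G.degree y ≠ 0) :
    IsCoupling G x y fun u v => muZero G x u * muZero G y v where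
  nonneg u v := mul_nonneg (muZero_nonneg u) (muZero_nonneg v)
  adj_of_ne_zero u v h := by
    constructor <;> by_contra hc <;> simp [muZero_of_not_adj hc] at h
  sum_snd u := by rw [← mul_sum, sum_muZero hy, mul_one]
  sum_fst v := by rw [← sum_mul, sum_muZero hx, one_mul]

theorem IsCoupling.transportCost_nonneg {π : V → V → ℝ} (hπ : IsCoupling G x y π) :
    0 ≤ transportCost G x y π :=
  sum_nonneg fun _ _ => sum_nonneg fun _ _ => mul_nonneg (Nat.cast_nonneg _) (hπ.nonneg _ _)

theorem Wone_le_transportCost {π : V → V → ℝ} (hπ : IsCoupling G x y π) :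
    Wone G x y ≤ transportCost G x y π := by
  refine csInf_le ⟨0, ?_⟩ ⟨π, hπ.1, hπ.2, hπ.3, hπ.4, rfl⟩
  rintro _ ⟨σ, h₀, h₁, h₂, h₃, rfl⟩
  exact IsCoupling.transportCost_nonneg ⟨h₀, h₁, h₂, h₃⟩

theorem le_Wone_of_forall_isCoupling (hx : G.degree x ≠ 0) (hy : G.degree y ≠ 0) {b : ℝ}
    (h : ∀ π, IsCoupling G x y π → b ≤ transportCost G x y π) : b ≤ Wone G x y := by
  refine le_csInf ⟨_, _, (isCoupling_prod hx hy).1, (isCoupling_prod hx hy).2,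
    (isCoupling_prod hx hy).3, (isCoupling_prod hx hy).4, rfl⟩ ?_
  rintro _ ⟨π, h₀, h₁, h₂, h₃, rfl⟩
  exact h π ⟨h₀, h₁, h₂, h₃⟩

/-- The easy half of Kantorovich duality. -/
theorem IsCoupling.sub_le_transportCost {π : V → V → ℝ} (hπ : IsCoupling G x y π) (f : V → ℝ)
    (hf : ∀ u v, G.Adj x u → G.Adj y v → f u - f v ≤ G.dist u v) :
    ∑ u ∈ G.neighborFinset x, muZero G x u * f u -
      ∑ v ∈ G.neighborFinset y, muZero G y v * f v ≤ transportCost G x y π := by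
  calc ∑ u ∈ G.neighborFinset x, muZero G x u * f u -
        ∑ v ∈ G.neighborFinset y, muZero G y v * f v
      = ∑ u ∈ G.neighborFinset x, ∑ v ∈ G.neighborFinset y, (f u - f v) * π u v := by
        simp only [← hπ.sum_snd, ← hπ.sum_fst, sum_mul, sub_mul, sum_sub_distrib]
        rw [sum_comm (s := G.neighborFinset y)]
        simp only [mul_comm]
    _ ≤ transportCost G x y π := by
        refine sum_le_sum fun u hu => sum_le_sum fun v hv => ?_
        exact mul_le_mul_of_nonneg_right
          (hf u v ((G.mem_neighborFinset x u).1 hu) ((G.mem_neighborFinset y v).1 hv))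
          (hπ.nonneg u v)

theorem sub_le_Wone_of_mem_Icc (hxy : G.Adj x y) (f : V → ℝ) (hf : ∀ u, f u ∈ Set.Icc 0 1) :
    ∑ u ∈ G.neighborFinset x, muZero G x u * f u -
      ∑ v ∈ G.neighborFinset y, muZero G y v * f v ≤ Wone G x y := by
  refine le_Wone_of_forall_isCoupling hxy.degree_pos_left.ne' hxy.degree_pos_right.ne'
    fun π hπ => hπ.sub_le_transportCost f fun u v hu hv => ?_
  rcases eq_or_ne u v with rfl | huv
  · simp
  · have hdist : 1 ≤ G.dist u v :=
      (hu.symm.reachable.trans (hxy.reachable.trans hv.reachable)).pos_dist_of_ne huv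
    obtain ⟨-, hu₁⟩ := hf u
    obtain ⟨hv₀, -⟩ := hf v
    have : (1 : ℝ) ≤ G.dist u v := by exact_mod_cast hdist
    linarith

theorem exists_common_neighbor_of_kappaZero_pos (hxy : G.Adj x y) (hκ : 0 < kappaZero G x y) :
    ∃ z, G.Adj x z ∧ G.Adj y z := by
  classical
  by_contra! hno
  have hW := sub_le_Wone_of_mem_Icc hxy (fun u => if G.Adj x u then 1 else 0)
    fun u => by split <;> simp
  have hx : ∑ u ∈ G.neighborFinset x, muZero G x u * (if G.Adj x u then 1 else 0) = 1 := by
    refine (sum_congr rfl fun u hu => ?_).trans (sum_muZero hxy.degree_pos_left.ne')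
    rw [if_pos ((G.mem_neighborFinset x u).1 hu), mul_one]
  have hy : ∑ v ∈ G.neighborFinset y, muZero G y v * (if G.Adj x v then 1 else 0) = 0 :=
    sum_eq_zero fun v hv => by
      rw [if_neg fun h => hno v h ((G.mem_neighborFinset y v).1 hv), mul_zero]
  rw [hx, hy] at hW
  rw [kappaZero] at hκ
  linarith

theorem one_div_degree_le_Wone (hxy : G.Adj x y) : 1 / G.degree y ≤ Wone G x y := by
  classical
  have hW := sub_le_Wone_of_mem_Icc hxy (fun u => if u = x then 0 else 1)
    fun u => by split <;> simp
  have hx : ∑ u ∈ G.neighborFinset x, muZero G x u * (if u = x then 0 else 1) = 1 := by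
    refine (sum_congr rfl fun u hu => ?_).trans (sum_muZero hxy.degree_pos_left.ne')
    rw [if_neg (G.ne_of_adj ((G.mem_neighborFinset x u).1 hu)).symm, mul_one]
  have hy : ∑ v ∈ G.neighborFinset y, muZero G y v * (if v = x then 0 else 1) =
      1 - 1 / G.degree y := by
    calc ∑ v ∈ G.neighborFinset y, muZero G y v * (if v = x then 0 else 1)
        = ∑ v ∈ G.neighborFinset y, (muZero G y v - if v = x then muZero G y v else 0) :=
          sum_congr rfl fun v _ => by split <;> simp
      _ = 1 - 1 / G.degree y := by
          rw [sum_sub_distrib, sum_muZero hxy.degree_pos_right.ne', sum_ite_eq',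
            if_pos ((G.mem_neighborFinset y x).2 hxy.symm), muZero_of_adj hxy.symm]
  rw [hx, hy] at hW
  linarith

theorem Wone_le_of_bijOn (T : V → V) (hT : Set.BijOn T (G.neighborSet x) (G.neighborSet y)) :
    Wone G x y ≤ (∑ u ∈ G.neighborFinset x, (G.dist u (T u) : ℝ)) / G.degree x := by
  classical
  have hdeg : G.degree x = G.degree y := by
    rw [← card_neighborSet_eq_degree, ← card_neighborSet_eq_degree]
    exact Fintype.card_congr (hT.equiv T)
  let π : V → V → ℝ := fun u v => if G.Adj x u ∧ T u = v then 1 / G.degree x else 0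
  have hrow : ∀ u ∈ G.neighborFinset x, ∀ v,
      π u v = if T u = v then (1 : ℝ) / G.degree x else 0 :=
    fun u hu v => by simp only [π, (G.mem_neighborFinset x u).1 hu, true_and]
  have hπ : IsCoupling G x y π := by
    refine ⟨fun u v => ?_, fun u v h => ?_, fun u => ?_, fun v => ?_⟩
    · dsimp only [π]
      split <;> positivity
    · by_contra hc
      refine h (if_neg fun ⟨hu, hv⟩ => hc ⟨hu, ?_⟩)
      exact hv ▸ hT.mapsTo hu
    · by_cases hu : G.Adj x u
      · rw [sum_congr rfl fun v _ => hrow u ((G.mem_neighborFinset x u).2 hu) v, sum_ite_eq,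
          if_pos ((G.mem_neighborFinset y _).2 (hT.mapsTo hu)), muZero_of_adj hu]
      · rw [muZero_of_not_adj hu]
        exact sum_eq_zero fun v _ => if_neg fun h => hu h.1
    · by_cases hv : G.Adj y v
      · obtain ⟨u₀, hu₀, rfl⟩ := hT.surjOn hv
        have : ∀ u ∈ G.neighborFinset x,
            π u (T u₀) = if u = u₀ then (1 : ℝ) / G.degree x else 0 := fun u hu => by
          rw [hrow u hu, (hT.injOn.eq_iff ((G.mem_neighborFinset x u).1 hu) hu₀)]
        rw [sum_congr rfl this, sum_ite_eq', if_pos ((G.mem_neighborFinset x u₀).2 hu₀),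
          muZero_of_adj hv, hdeg]
      · rw [muZero_of_not_adj hv]
        refine sum_eq_zero fun u hu => ?_
        rw [hrow u hu, if_neg]
        rintro rfl
        exact hv (hT.mapsTo ((G.mem_neighborFinset x u).1 hu))
  refine (Wone_le_transportCost hπ).trans_eq ?_
  rw [transportCost, sum_div]
  refine sum_congr rfl fun u hu => ?_
  simp only [hrow u hu, mul_ite, mul_zero]
  have hTu : T u ∈ G.neighborFinset y :=
    (G.mem_neighborFinset y _).2 (hT.mapsTo ((G.mem_neighborFinset x u).1 hu))
  rw [sum_ite_eq, if_pos hTu, mul_one_div]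

end Transport

section Complete

variable [Fintype V] [∀ v, Fintype ((⊤ : SimpleGraph V).neighborSet v)] {x y : V}

theorem degree_top_eq_card_sub_one (x : V) :
    (⊤ : SimpleGraph V).degree x = Fintype.card V - 1 := by
  classical
  convert complete_graph_degree x

theorem cast_degree_top (x : V) : ((⊤ : SimpleGraph V).degree x : ℝ) = Fintype.card V - 1 := by
  rw [degree_top_eq_card_sub_one, Nat.cast_sub (Fintype.card_pos_iff.2 ⟨x⟩), Nat.cast_one]

theorem Wone_top (hxy : x ≠ y) : Wone (⊤ : SimpleGraph V) x y = 1 / (Fintype.card V - 1) := by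
  classical
  have hadj : (⊤ : SimpleGraph V).Adj x y := (top_adj x y).2 hxy
  refine le_antisymm ?_ (cast_degree_top y ▸ one_div_degree_le_Wone hadj)
  have hswap : Set.BijOn (Equiv.swap x y) ((⊤ : SimpleGraph V).neighborSet x)
      ((⊤ : SimpleGraph V).neighborSet y) :=
    (Equiv.swap x y).bijOn fun u => by simp [Equiv.swap_apply_eq_iff]
  have hcost : ∑ u ∈ (⊤ : SimpleGraph V).neighborFinset x,
      ((⊤ : SimpleGraph V).dist u (Equiv.swap x y u) : ℝ) =
      ∑ u ∈ (⊤ : SimpleGraph V).neighborFinset x, if u = y then 1 else 0 := by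
    refine sum_congr rfl fun u hu => ?_
    have hux : u ≠ x := ((top_adj x u).1 ((mem_neighborFinset _ x u).1 hu)).symm
    split_ifs with huy
    · rw [huy, Equiv.swap_apply_right, dist_eq_one_iff_adj.2 hadj.symm, Nat.cast_one]
    · rw [Equiv.swap_apply_of_ne_of_ne hux huy, dist_self, Nat.cast_zero]
  refine (Wone_le_of_bijOn _ hswap).trans_eq ?_
  rw [hcost, sum_ite_eq', if_pos ((mem_neighborFinset _ x y).2 hadj), cast_degree_top]

theorem kappaZero_top (hxy : x ≠ y) :
    kappaZero (⊤ : SimpleGraph V) x y = 1 - 1 / (Fintype.card V - 1) := by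
  rw [kappaZero, Wone_top hxy]

end Complete

namespace SimpleGraph

variable {G : SimpleGraph V}

theorem Iso.eq_top {W : Type*} (φ : G ≃g (⊤ : SimpleGraph W)) : G = ⊤ := by
  ext u w
  rw [← φ.map_adj_iff, top_adj, top_adj, φ.injective.ne_iff]

variable (G) in
def EdgesInTriangles : Prop := ∀ ⦃x y : V⦄, G.Adj x y → ∃ z, G.Adj x z ∧ G.Adj y z

variable [∀ v, Fintype (G.neighborSet v)] {v a b c : V}

theorem exists_adj_ne_ne (h : 2 < G.degree v) (u w : V) : ∃ z, G.Adj v z ∧ z ≠ u ∧ z ≠ w := by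
  classical
  have hpos : 0 < #(G.neighborFinset v \ {u, w}) := by
    have hsdiff := le_card_sdiff {u, w} (G.neighborFinset v)
    have hpair : #({u, w} : Finset V) ≤ 2 := card_le_two
    rw [card_neighborFinset_eq_degree] at hsdiff
    omega
  obtain ⟨z, hz⟩ := card_pos.1 hpos
  simp only [mem_sdiff, mem_neighborFinset, mem_insert, mem_singleton, not_or] at hz
  exact ⟨z, hz.1, hz.2⟩

theorem neighborFinset_eq_of_degree_eq_three [DecidableEq V] (hdeg : G.degree v = 3)
    (hab : a ≠ b) (hac : a ≠ c) (hbc : b ≠ c) (ha : G.Adj v a) (hb : G.Adj v b)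
    (hc : G.Adj v c) : G.neighborFinset v = {a, b, c} := by
  refine (eq_of_subset_of_card_le (fun z hz => ?_) ?_).symm
  · simp only [mem_insert, mem_singleton] at hz
    rcases hz with rfl | rfl | rfl <;> simpa
  · rw [card_neighborFinset_eq_degree, hdeg, card_eq_three.2 ⟨a, b, c, hab, hac, hbc, rfl⟩]

theorem eq_or_eq_or_eq_of_degree_eq_three (hdeg : G.degree v = 3) (hab : a ≠ b) (hac : a ≠ c)
    (hbc : b ≠ c) (ha : G.Adj v a) (hb : G.Adj v b) (hc : G.Adj v c) {z : V}
    (hz : G.Adj v z) : z = a ∨ z = b ∨ z = c := by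
  classical
  simpa [neighborFinset_eq_of_degree_eq_three hdeg hab hac hbc ha hb hc] using
    (G.mem_neighborFinset v z).2 hz

theorem EdgesInTriangles.adj_of_cubic (htri : G.EdgesInTriangles) (hdeg : ∀ v, G.degree v = 3)
    (hab : a ≠ b) (hac : a ≠ c) (hbc : b ≠ c) (ha : G.Adj v a) (hb : G.Adj v b)
    (hc : G.Adj v c) : G.Adj a b := by
  by_contra hnab
  have hNv := fun {z} => eq_or_eq_or_eq_of_degree_eq_three (z := z) (hdeg v) hab hac hbc ha hb hc
  have hac' : G.Adj a c := by
    obtain ⟨z, hvz, haz⟩ := htri ha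
    rcases hNv hvz with rfl | rfl | rfl
    · exact absurd haz G.irrefl
    · exact absurd haz hnab
    · exact haz
  have hbc' : G.Adj b c := by
    obtain ⟨z, hvz, hbz⟩ := htri hb
    rcases hNv hvz with rfl | rfl | rfl
    · exact absurd hbz.symm hnab
    · exact absurd hbz G.irrefl
    · exact hbz
  have hNc := fun {z} => eq_or_eq_or_eq_of_degree_eq_three (z := z) (hdeg c) (G.ne_of_adj ha)
    (G.ne_of_adj hb) hab hc.symm hac'.symm hbc'.symm
  -- the third neighbour `w` of `a` is not in `{v, a, b, c}`, so the edge `aw` lies in no triangle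
  obtain ⟨w, haw, hwv, hwc⟩ := exists_adj_ne_ne (by rw [hdeg a]; norm_num) v c
  have hNa := fun {z} => eq_or_eq_or_eq_of_degree_eq_three (z := z) (hdeg a) (G.ne_of_adj hc)
    hwv.symm hwc.symm ha.symm hac' haw
  obtain ⟨z, haz, hwz⟩ := htri haw
  rcases hNa haz with rfl | rfl | rfl
  · rcases hNv hwz.symm with rfl | rfl | rfl
    · exact G.irrefl haw
    · exact hnab haw
    · exact hwc rfl
  · rcases hNc hwz.symm with rfl | rfl | rfl
    · exact hwv rfl
    · exact G.irrefl haw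
    · exact hnab haw
  · exact G.irrefl hwz

theorem EdgesInTriangles.insert_neighborFinset_eq_of_adj [DecidableEq V]
    (htri : G.EdgesInTriangles) (hdeg : ∀ v, G.degree v = 3) (hva : G.Adj v a) :
    insert a (G.neighborFinset a) = insert v (G.neighborFinset v) := by
  have hdeg' : 2 < G.degree v := by rw [hdeg v]; norm_num
  obtain ⟨b, hvb, hba, -⟩ := exists_adj_ne_ne hdeg' a a
  obtain ⟨c, hvc, hca, hcb⟩ := exists_adj_ne_ne hdeg' a b
  have hab := htri.adj_of_cubic hdeg hba.symm hca.symm hcb.symm hva hvb hvc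
  have hac := htri.adj_of_cubic hdeg hca.symm hba.symm hcb hva hvc hvb
  rw [neighborFinset_eq_of_degree_eq_three (hdeg v) hba.symm hca.symm hcb.symm hva hvb hvc,
    neighborFinset_eq_of_degree_eq_three (hdeg a) (G.ne_of_adj hvb) (G.ne_of_adj hvc) hcb.symm
      hva.symm hab hac, insert_comm]

theorem EdgesInTriangles.eq_top_of_cubic (htri : G.EdgesInTriangles) (hconn : G.Connected)
    (hdeg : ∀ v, G.degree v = 3) : G = ⊤ := by
  classical
  obtain ⟨v⟩ := hconn.nonempty
  have hconst : ∀ u, insert u (G.neighborFinset u) = insert v (G.neighborFinset v) := by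
    intro u
    obtain ⟨p⟩ := hconn.preconnected u v
    induction p with
    | nil => rfl
    | cons h _ ih => exact (htri.insert_neighborFinset_eq_of_adj hdeg h).symm.trans ih
  ext u w
  refine ⟨G.ne_of_adj, fun huw => ?_⟩
  have : w ∈ insert u (G.neighborFinset u) := by
    rw [hconst u, ← hconst w]
    exact mem_insert_self w _
  simpa [Ne.symm huw] using this

end SimpleGraph

/-- Every edge of `K₄` has `κ₀ = 2/3`, and `K₄` is the unique (up to
isomorphism) finite connected simple 3-regular graph with `κ₀ > 0` on every edge. -/
theorem K4_unique_positively_curved_cubic :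
    (∀ x y : Fin 4, (⊤ : SimpleGraph (Fin 4)).Adj x y →
      kappaZero (⊤ : SimpleGraph (Fin 4)) x y = 2 / 3) ∧
    (∀ (V : Type) [Fintype V] (G : SimpleGraph V) [∀ v, Fintype (G.neighborSet v)],
      G.Connected → (∀ v : V, G.degree v = 3) →
      ((∀ x y : V, G.Adj x y → 0 < kappaZero G x y) ↔
        Nonempty (G ≃g (⊤ : SimpleGraph (Fin 4))))) := by
  refine ⟨fun x y hxy => ?_, fun V _ G _ hconn hdeg => ⟨fun hpos => ?_, fun ⟨φ⟩ x y hxy => ?_⟩⟩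
  · rw [kappaZero_top ((top_adj x y).1 hxy), Fintype.card_fin]
    norm_num
  · have htri : G.EdgesInTriangles := fun x y hxy =>
      exists_common_neighbor_of_kappaZero_pos hxy (hpos x y hxy)
    obtain rfl := htri.eq_top_of_cubic hconn hdeg
    obtain ⟨v⟩ := hconn.nonempty
    have hcard : Fintype.card V = 4 := by
      have := hdeg v
      rw [degree_top_eq_card_sub_one] at this
      omega
    exact ⟨Iso.completeGraph (Fintype.equivFinOfCardEq hcard)⟩
  · obtain rfl := φ.eq_top
    rw [kappaZero_top ((top_adj x y).1 hxy), Fintype.card_congr φ.toEquiv, Fintype.card_fin]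
    norm_num
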